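/- For all i ≥ 4, m ∈ {1,2,3} and j ∈ {1,2}, the chromatic index of H^{-i,3}_{m,j} equals i+1. -/

import Mathlib

/-- The integral sum graph on vertex set `{r, ..., s} ⊆ ℤ`:
distinct `u, v` are adjacent iff `u + v` also lies in `{r, ..., s}`. -/
def intervalSumGraph (r s : ℤ) : SimpleGraph ℤ where
  Adj u v := u ≠ v ∧ u ∈ Set.Icc r s ∧ v ∈ Set.Icc r s ∧ u + v ∈ Set.Icc r s
  symm := ⟨by
    rintro u v ⟨h1, h2, h3, h4⟩
    exact ⟨h1.symm, h3, h2, by rwa [add_comm]⟩⟩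
  loopless := ⟨fun u h => h.1 rfl⟩

/-- The graph `H^{-i,s}_{m,j}`: obtained from the integral sum graph `G_{-i,s}`
by deleting the vertices `-m` and `j` and all edges whose endpoint labels sum
to `-m` or to `j`. -/
def HGraph (i s m j : ℤ) : SimpleGraph ℤ where
  Adj u v := u ≠ v ∧ u ∈ Set.Icc (-i) s ∧ v ∈ Set.Icc (-i) s ∧ u + v ∈ Set.Icc (-i) s ∧
    u ≠ -m ∧ v ≠ -m ∧ u ≠ j ∧ v ≠ j ∧ u + v ≠ -m ∧ u + v ≠ j
  symm := ⟨by
    rintro u v ⟨h1, h2, h3, h4, h5, h6, h7, h8, h9, h10⟩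
    exact ⟨h1.symm, h3, h2, by rwa [add_comm], h6, h5, h8, h7,
      by rwa [add_comm], by rwa [add_comm]⟩⟩
  loopless := ⟨fun u h => h.1 rfl⟩

/-- The chromatic index of a graph: the least `n` such that there is a proper
edge coloring with `n` colors (distinct edges sharing a vertex get distinct colors). -/
noncomputable def chromaticIndex {V : Type*} (G : SimpleGraph V) : ℕ :=
  sInf {n : ℕ | ∃ c : Sym2 V → Fin n,
    ∀ e ∈ G.edgeSet, ∀ f ∈ G.edgeSet, e ≠ f → (∃ v, v ∈ e ∧ v ∈ f) → c e ≠ c f}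

/-- The sum of the two endpoint labels of an edge. -/
def edgeSum (e : Sym2 ℤ) : ℤ := Sym2.lift ⟨fun a b => a + b, fun a b => add_comm a b⟩ e

/-- The edge-sum chromatic number: the number of nonempty edge-sum color classes. -/
noncomputable def edgeSumChromatic (G : SimpleGraph ℤ) : ℕ :=
  {k : ℤ | ∃ e ∈ G.edgeSet, edgeSum e = k}.ncard

/-!
The vertex `0` has the `i + 1` neighbors `[-i, 3] \ {-m, j, 0}`, so at least `i + 1` colors are
needed. Coloring every edge by the sum of its ends is proper and uses the `i + 2` colors
`[-i, 3] \ {-m, j}`. Since `j ∈ {1, 2}`, the only edge with sum `3` is `s(0, 3)`; give it color `0`,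
which is free at `0`. The resulting clash at `3` with `s(3, -3)` is resolved by giving that edge
color `3 - m`, which is missing at both `3` and `-3`. When `3 - m = j` is not available, give
`s(3, -3)` color `-i` instead and move the edge of sum `-i` at `-3` to color `0`.
-/

open Finset

section EdgeColoring

variable {V α : Type*}

def IsProperEdgeColoring (G : SimpleGraph V) (c : Sym2 V → α) : Prop :=
  ∀ e ∈ G.edgeSet, ∀ f ∈ G.edgeSet, e ≠ f → (∃ v, v ∈ e ∧ v ∈ f) → c e ≠ c f

variable {G : SimpleGraph V} {c : Sym2 V → α}

theorem isProperEdgeColoring_iff :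
    IsProperEdgeColoring G c ↔
      ∀ u v w, G.Adj u v → G.Adj u w → v ≠ w → c s(u, v) ≠ c s(u, w) := by
  refine ⟨fun hc u v w huv huw hvw =>
    hc _ huv _ huw (fun h => hvw (Sym2.congr_right.1 h)) ⟨u, by simp, by simp⟩, ?_⟩
  rintro h e he f hf hef ⟨x, hxe, hxf⟩
  rw [← Sym2.other_spec hxe] at he hef ⊢
  rw [← Sym2.other_spec hxf] at hf hef ⊢
  exact h x _ _ he hf fun hyz => hef (by rw [hyz])

theorem IsProperEdgeColoring.card_le [Fintype α] (hc : IsProperEdgeColoring G c) {u : V}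
    {s : Finset V} (hs : ∀ v ∈ s, G.Adj u v) : #s ≤ Fintype.card α := by
  refine card_le_card_of_injOn (fun v => c s(u, v)) (fun _ _ => mem_univ _) ?_
  intro v hv w hw hvw
  by_contra hne
  exact isProperEdgeColoring_iff.1 hc u v w (hs v hv) (hs w hw) hne hvw

theorem IsProperEdgeColoring.exists_fin (hc : IsProperEdgeColoring G c) {S : Finset α}
    (hS : S.Nonempty) (hcS : ∀ e ∈ G.edgeSet, c e ∈ S) :
    ∃ c' : Sym2 V → Fin #S, IsProperEdgeColoring G c' := by
  classical
  obtain ⟨a₀, ha₀⟩ := hS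
  let f : α → Fin #S := fun a => if h : a ∈ S then S.equivFin ⟨a, h⟩ else S.equivFin ⟨a₀, ha₀⟩
  refine ⟨f ∘ c, fun e he e' he' hee' hx hf => hc e he e' he' hee' hx ?_⟩
  simpa [f, hcS e he, hcS e' he'] using hf

theorem chromaticIndex_le {n : ℕ} {c : Sym2 V → Fin n} (hc : IsProperEdgeColoring G c) :
    chromaticIndex G ≤ n :=
  Nat.sInf_le ⟨c, hc⟩

theorem le_chromaticIndex {n : ℕ} {c : Sym2 V → Fin n} (hc : IsProperEdgeColoring G c) {u : V}
    {s : Finset V} (hs : ∀ v ∈ s, G.Adj u v) : #s ≤ chromaticIndex G := by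
  obtain ⟨c', hc'⟩ : ∃ c' : Sym2 V → Fin (chromaticIndex G), IsProperEdgeColoring G c' :=
    Nat.sInf_mem (s := {n | ∃ c : Sym2 V → Fin n, IsProperEdgeColoring G c}) ⟨n, c, hc⟩
  exact (hc'.card_le hs).trans_eq (Fintype.card_fin _)

end EdgeColoring

theorem Int.card_Icc_sdiff_three {lo hi a b c : ℤ} (ha : a ∈ Icc lo hi) (hb : b ∈ Icc lo hi)
    (hc : c ∈ Icc lo hi) (hab : a ≠ b) (hac : a ≠ c) (hbc : b ≠ c) :
    #(Icc lo hi \ {a, b, c}) = (hi + 1 - lo).toNat - 3 := by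
  rw [card_sdiff_of_subset (by simp [insert_subset_iff, *]), Int.card_Icc, card_insert_of_notMem,
    card_pair hbc]
  simp [*]

theorem hGraph_adj {i s m j u v : ℤ} : (HGraph i s m j).Adj u v ↔
    u ≠ v ∧ (-i ≤ u ∧ u ≤ s) ∧ (-i ≤ v ∧ v ≤ s) ∧ (-i ≤ u + v ∧ u + v ≤ s) ∧
      u ≠ -m ∧ v ≠ -m ∧ u ≠ j ∧ v ≠ j ∧ u + v ≠ -m ∧ u + v ≠ j :=
  Iff.rfl

theorem edgeSum_mk (u v : ℤ) : edgeSum s(u, v) = u + v := rfl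

def shortRecoloring (m : ℤ) (e : Sym2 ℤ) : ℤ :=
  if edgeSum e = 3 then 0 else if edgeSum e = 0 ∧ 3 ∈ e then 3 - m else edgeSum e

def chainRecoloring (i : ℤ) (e : Sym2 ℤ) : ℤ :=
  if edgeSum e = 3 then 0 else if edgeSum e = 0 ∧ 3 ∈ e then -i
  else if edgeSum e = -i ∧ -3 ∈ e then 0 else edgeSum e

section

variable {i m j : ℤ}

theorem isProperEdgeColoring_shortRecoloring (hm : 1 ≤ m ∧ m ≤ 3) (hj : 1 ≤ j ∧ j ≤ 2) :
    IsProperEdgeColoring (HGraph i 3 m j) (shortRecoloring m) := by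
  rw [isProperEdgeColoring_iff]
  intro u v w huv huw hvw
  rw [hGraph_adj] at huv huw
  simp only [shortRecoloring, edgeSum_mk, Sym2.mem_iff]
  split_ifs <;> omega

theorem isProperEdgeColoring_chainRecoloring (hm : 1 ≤ m ∧ m ≤ 2) (hmj : m + j = 3)
    (hi : 4 ≤ i) :
    IsProperEdgeColoring (HGraph i 3 m j) (chainRecoloring i) := by
  rw [isProperEdgeColoring_iff]
  intro u v w huv huw hvw
  rw [hGraph_adj] at huv huw
  simp only [chainRecoloring, edgeSum_mk, Sym2.mem_iff]
  split_ifs <;> omega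

theorem shortRecoloring_mem (hm : 1 ≤ m ∧ m ≤ 3) (hj : 1 ≤ j ∧ j ≤ 2) (hmj : m + j ≠ 3) :
    ∀ e ∈ (HGraph i 3 m j).edgeSet, shortRecoloring m e ∈ Icc (-i) 3 \ {-m, j, 3} := by
  refine Sym2.ind fun u v huv => ?_
  rw [SimpleGraph.mem_edgeSet, hGraph_adj] at huv
  simp only [shortRecoloring, edgeSum_mk, Sym2.mem_iff, mem_sdiff, mem_Icc, mem_insert,
    mem_singleton]
  split_ifs <;> omega

theorem chainRecoloring_mem (hm : 1 ≤ m ∧ m ≤ 2) (hmj : m + j = 3) :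
    ∀ e ∈ (HGraph i 3 m j).edgeSet, chainRecoloring i e ∈ Icc (-i) 3 \ {-m, j, 3} := by
  refine Sym2.ind fun u v huv => ?_
  rw [SimpleGraph.mem_edgeSet, hGraph_adj] at huv
  simp only [chainRecoloring, edgeSum_mk, Sym2.mem_iff, mem_sdiff, mem_Icc, mem_insert,
    mem_singleton]
  split_ifs <;> omega

end

theorem hGraph_adj_zero {i s m j v : ℤ} (hi : 0 ≤ i) (hs : 0 ≤ s) (hm : m ≠ 0) (hj : j ≠ 0)
    (hv : v ∈ Icc (-i) s \ {-m, j, 0}) : (HGraph i s m j).Adj 0 v := by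
  simp only [mem_sdiff, mem_Icc, mem_insert, mem_singleton] at hv
  rw [hGraph_adj]
  omega

theorem chromaticIndex_H_i_3_m_j (i : ℕ) (hi : 4 ≤ i) (m j : ℤ)
    (hm : m ∈ ({1, 2, 3} : Set ℤ)) (hj : j ∈ ({1, 2} : Set ℤ)) :
    chromaticIndex (HGraph (i : ℤ) 3 m j) = i + 1 := by
  simp only [Set.mem_insert_iff, Set.mem_singleton_iff] at hm hj
  have hcard : ∀ x ∈ ({0, 3} : Finset ℤ), #(Icc (-(i : ℤ)) 3 \ {-m, j, x}) = i + 1 := by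
    intro x hx
    simp only [mem_insert, mem_singleton] at hx
    rw [Int.card_Icc_sdiff_three] <;> (try rw [mem_Icc]) <;> omega
  obtain ⟨c, hc, hcS⟩ : ∃ c : Sym2 ℤ → ℤ, IsProperEdgeColoring (HGraph i 3 m j) c ∧
      ∀ e ∈ (HGraph i 3 m j).edgeSet, c e ∈ Icc (-(i : ℤ)) 3 \ {-m, j, 3} := by
    by_cases hmj : m + j = 3
    · exact ⟨chainRecoloring i, isProperEdgeColoring_chainRecoloring (by omega) hmj (by omega),
        chainRecoloring_mem (by omega) hmj⟩
    · exact ⟨shortRecoloring m, isProperEdgeColoring_shortRecoloring (by omega) (by omega),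
        shortRecoloring_mem (by omega) (by omega) hmj⟩
  obtain ⟨c', hc'⟩ := hc.exists_fin (by rw [← card_pos, hcard 3 (by simp)]; omega) hcS
  refine le_antisymm ((chromaticIndex_le hc').trans_eq (hcard 3 (by simp))) ?_
  rw [← hcard 0 (by simp)]
  exact le_chromaticIndex hc' fun v =>
    hGraph_adj_zero (by omega) (by norm_num) (by omega) (by omega)
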